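/- arXiv:2011.11223 — 2 statements merged into one kernel-verified Lean document; each statement's English description precedes it below -/
import Mathlib

section
/- Let G = (V, E) be a connected, undirected, unweighted finite graph, let A be a complex matrix indexed by V with geodesic-width ω(A), and let P_A be its diagonal preconditioning matrix. If Q is a diagonal matrix with real diagonal entries such that Q − P_A is positive semidefinite (equivalently, Q(i,i) ≥ P_A(i,i) for all i ∈ V), then Q² − A* A is positive semidefinite. -/
/-!
For a diagonal `D = diag(d)`, `D - AᴴA ⪰ 0` is the inequality `‖Ax‖² ≤ Σⱼ dⱼ |xⱼ|²`. Applying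
Cauchy–Schwarz to each row of `Ax` with weights `|A k j|` gives Schur's test
`‖Ax‖² ≤ Σⱼ (Σₖ rₖ |A k j|) |xⱼ|²`, where `rₖ` is the `k`-th absolute row sum. Since `A` has
geodesic-width `ω`, only rows `k ∈ B(j, ω)` contribute to the weight at `j`, and both `rₖ` for
those rows and the absolute column sum at `j` are bounded by `P_A(j,j)`; so the weight is at most
`P_A(j,j)² ≤ Q(j,j)²`.
-/

open Matrix BigOperators
open scoped ComplexOrder

/-- The closed ball `B(i, s)` of radius `s` around vertex `i` in the geodesic distance. -/
noncomputable def gball {V : Type*} [Fintype V] (G : SimpleGraph V) (i : V) (s : ℕ) :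
    Finset V :=
  Finset.univ.filter fun j => G.dist i j ≤ s

/-- The diagonal entries of the preconditioning matrix `P_A` of a matrix `A` with
geodesic-width parameter `ω`:
`P_A(i,i) = max_{k ∈ B(i,ω)} max( Σ_{j ∈ B(k,ω)} |A(j,k)|, Σ_{j ∈ B(k,ω)} |A(k,j)| )`. -/
noncomputable def precond {V : Type*} [Fintype V] (G : SimpleGraph V)
    (A : Matrix V V ℂ) (ω : ℕ) (i : V) : ℝ :=
  (gball G i ω).sup'
    ⟨i, by simp [gball, SimpleGraph.dist_self]⟩
    fun k => max (∑ j ∈ gball G k ω, ‖A j k‖)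
      (∑ j ∈ gball G k ω, ‖A k j‖)

section SchurTest

variable {𝕜 : Type*} [RCLike 𝕜] {m n : Type*} [Fintype m] [Fintype n]

lemma sq_norm_dotProduct_le (a x : n → 𝕜) :
    ‖a ⬝ᵥ x‖ ^ 2 ≤ (∑ j, ‖a j‖) * ∑ j, ‖a j‖ * ‖x j‖ ^ 2 := by
  have htri : ‖a ⬝ᵥ x‖ ≤ ∑ j, ‖a j‖ * ‖x j‖ := by
    simpa only [dotProduct, norm_mul] using norm_sum_le Finset.univ fun j => a j * x j
  calc ‖a ⬝ᵥ x‖ ^ 2 ≤ (∑ j, ‖a j‖ * ‖x j‖) ^ 2 := by gcongr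
    _ ≤ (∑ j, ‖a j‖) * ∑ j, ‖a j‖ * ‖x j‖ ^ 2 :=
      Finset.sum_sq_le_sum_mul_sum_of_sq_le_mul _ (fun j _ => norm_nonneg _)
        (fun j _ => by positivity) (fun j _ => (by ring : _ = _).le)

lemma sum_sq_norm_mulVec_le (A : Matrix m n 𝕜) (x : n → 𝕜) :
    ∑ k, ‖(A *ᵥ x) k‖ ^ 2 ≤
      ∑ j, (∑ k, (∑ j', ‖A k j'‖) * ‖A k j‖) * ‖x j‖ ^ 2 :=
  calc ∑ k, ‖(A *ᵥ x) k‖ ^ 2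
      ≤ ∑ k, (∑ j', ‖A k j'‖) * ∑ j, ‖A k j‖ * ‖x j‖ ^ 2 :=
        Finset.sum_le_sum fun k _ => sq_norm_dotProduct_le (A k) x
    _ = ∑ j, (∑ k, (∑ j', ‖A k j'‖) * ‖A k j‖) * ‖x j‖ ^ 2 := by
        simp only [Finset.mul_sum, Finset.sum_mul, mul_assoc]
        exact Finset.sum_comm

lemma star_dotProduct_diagonal_mulVec [DecidableEq n] (d : n → ℝ) (x : n → 𝕜) :
    star x ⬝ᵥ (diagonal (fun j => (d j : 𝕜)) *ᵥ x) = ((∑ j, d j * ‖x j‖ ^ 2 : ℝ) : 𝕜) := by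
  simp only [dotProduct, mulVec_diagonal, Pi.star_apply, RCLike.star_def]
  push_cast
  refine Finset.sum_congr rfl fun j _ => ?_
  rw [← RCLike.conj_mul]
  ring

lemma star_dotProduct_conjTranspose_mul_self_mulVec (A : Matrix m n 𝕜) (x : n → 𝕜) :
    star x ⬝ᵥ ((Aᴴ * A) *ᵥ x) = ((∑ k, ‖(A *ᵥ x) k‖ ^ 2 : ℝ) : 𝕜) := by
  rw [← mulVec_mulVec, dotProduct_mulVec, ← star_mulVec]
  simp only [dotProduct, Pi.star_apply, RCLike.star_def]
  push_cast
  exact Finset.sum_congr rfl fun k _ => RCLike.conj_mul _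

lemma posSemidef_diagonal_sub_conjTranspose_mul_self [DecidableEq n] (A : Matrix m n 𝕜)
    {d : n → ℝ} (hd : ∀ j, ∑ k, (∑ j', ‖A k j'‖) * ‖A k j‖ ≤ d j) :
    (diagonal (fun j => (d j : 𝕜)) - Aᴴ * A).PosSemidef := by
  refine .of_dotProduct_mulVec_nonneg ?_ fun x => ?_
  · refine .sub ?_ (posSemidef_conjTranspose_mul_self A).1
    exact isHermitian_diagonal_of_self_adjoint _ (funext fun j => RCLike.conj_ofReal _)
  · rw [sub_mulVec, dotProduct_sub, star_dotProduct_diagonal_mulVec,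
      star_dotProduct_conjTranspose_mul_self_mulVec, ← RCLike.ofReal_sub,
      RCLike.ofReal_nonneg, sub_nonneg]
    refine (sum_sq_norm_mulVec_le A x).trans (Finset.sum_le_sum fun j _ => ?_)
    gcongr
    exact hd j

end SchurTest

section GeodesicWidth

variable {V : Type*} [Fintype V] {G : SimpleGraph V} {A : Matrix V V ℂ} {ω : ℕ}

lemma mem_gball_self (G : SimpleGraph V) (i : V) (s : ℕ) : i ∈ gball G i s := by
  simp [gball]

lemma le_precond_of_mem_gball {j k : V} (hk : k ∈ gball G j ω) :
    max (∑ i ∈ gball G k ω, ‖A i k‖) (∑ i ∈ gball G k ω, ‖A k i‖) ≤ precond G A ω j :=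
  Finset.le_sup' (fun k => max (∑ i ∈ gball G k ω, ‖A i k‖) (∑ i ∈ gball G k ω, ‖A k i‖)) hk

lemma precond_nonneg (j : V) : 0 ≤ precond G A ω j :=
  (Finset.sum_nonneg fun _ _ => norm_nonneg _).trans
    ((le_max_left _ _).trans (le_precond_of_mem_gball (mem_gball_self G j ω)))

variable (hω : ∀ i j, ω < G.dist i j → A i j = 0)
include hω

lemma mem_gball_of_ne_zero {k j : V} (h : A k j ≠ 0) : k ∈ gball G j ω := by
  by_contra hk
  simp only [gball, Finset.mem_filter, Finset.mem_univ, true_and, not_le] at hk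
  exact h (hω k j (G.dist_comm ▸ hk))

lemma sum_gball_norm_row (k : V) : ∑ j ∈ gball G k ω, ‖A k j‖ = ∑ j, ‖A k j‖ :=
  Finset.sum_subset (Finset.subset_univ _) fun j _ hj => by
    rw [hω k j (by simpa [gball] using hj), norm_zero]

lemma sum_gball_norm_col (j : V) : ∑ k ∈ gball G j ω, ‖A k j‖ = ∑ k, ‖A k j‖ :=
  Finset.sum_subset (Finset.subset_univ _) fun k _ hk => by
    rw [not_not.mp (mt (mem_gball_of_ne_zero hω) hk), norm_zero]

lemma sum_norm_row_le_precond {k j : V} (h : A k j ≠ 0) : ∑ i, ‖A k i‖ ≤ precond G A ω j := by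
  rw [← sum_gball_norm_row hω]
  exact (le_max_right _ _).trans (le_precond_of_mem_gball (mem_gball_of_ne_zero hω h))

lemma sum_norm_col_le_precond (j : V) : ∑ k, ‖A k j‖ ≤ precond G A ω j := by
  rw [← sum_gball_norm_col hω]
  exact (le_max_left _ _).trans (le_precond_of_mem_gball (mem_gball_self G j ω))

lemma sum_rowSum_mul_norm_le_sq_precond (j : V) :
    ∑ k, (∑ i, ‖A k i‖) * ‖A k j‖ ≤ precond G A ω j ^ 2 :=
  calc ∑ k, (∑ i, ‖A k i‖) * ‖A k j‖ ≤ ∑ k, precond G A ω j * ‖A k j‖ := by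
        refine Finset.sum_le_sum fun k _ => ?_
        by_cases h : A k j = 0
        · simp [h]
        · exact mul_le_mul_of_nonneg_right (sum_norm_row_le_precond hω h) (norm_nonneg _)
    _ ≤ precond G A ω j ^ 2 := by
        rw [← Finset.mul_sum, sq]
        exact mul_le_mul_of_nonneg_left (sum_norm_col_le_precond hω j) (precond_nonneg j)

end GeodesicWidth

theorem stmt_1_general {V : Type*} [Fintype V] [DecidableEq V]
    (G : SimpleGraph V)
    (A : Matrix V V ℂ) (ω : ℕ) (hω : ∀ i j, ω < G.dist i j → A i j = 0)
    (q : V → ℝ) (Q : Matrix V V ℂ)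
    (hQdiag : Q = Matrix.diagonal fun i => (q i : ℂ))
    (hPSD : (Q - Matrix.diagonal fun i => ((precond G A ω i : ℝ) : ℂ)).PosSemidef) :
    (Q ^ 2 - Aᴴ * A).PosSemidef := by
  subst hQdiag
  have hPq (i : V) : precond G A ω i ≤ q i := by
    rw [diagonal_sub, posSemidef_diagonal_iff] at hPSD
    simpa using hPSD i
  have hQsq : diagonal (fun i => (q i : ℂ)) ^ 2 = diagonal fun i => ((q i ^ 2 : ℝ) : ℂ) := by
    simp only [sq, diagonal_mul_diagonal, Complex.ofReal_mul]
  rw [hQsq]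
  exact posSemidef_diagonal_sub_conjTranspose_mul_self A fun j =>
    (sum_rowSum_mul_norm_le_sq_precond hω j).trans (pow_le_pow_left₀ (precond_nonneg j) (hPq j) 2)

/-- Let `G` be a connected finite graph, `A` a complex matrix indexed by the
vertices with geodesic-width at most `ω`, and `P_A` its diagonal preconditioning matrix.
If `Q` is a diagonal matrix with real diagonal entries such that `Q - P_A` is positive
semidefinite, then `Q² - Aᴴ A` is positive semidefinite. -/
theorem stmt_1 {V : Type*} [Fintype V] [DecidableEq V]
    (G : SimpleGraph V) (hG : G.Connected)
    (A : Matrix V V ℂ) (ω : ℕ) (hω : ∀ i j, ω < G.dist i j → A i j = 0)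
    (q : V → ℝ) (Q : Matrix V V ℂ)
    (hQdiag : Q = Matrix.diagonal fun i => (q i : ℂ))
    (hPSD : (Q - Matrix.diagonal fun i => ((precond G A ω i : ℝ) : ℂ)).PosSemidef) :
    (Q ^ 2 - Aᴴ * A).PosSemidef :=
  stmt_1_general G A ω hω q Q hQdiag hPSD
end

section
/- Let A be an N×N complex positive semidefinite matrix and let Q be an invertible diagonal matrix with real diagonal entries satisfying Q(i,i) ≥ Σ_j |A(i,j)| for every index i. Then for every initial vector x₀ ∈ ℂ^N, the sequence defined by x_{n+1} = (I − Q^{-1} A) x_n converges exponentially to a vector u satisfying A u = 0; precisely, there exist u ∈ ℂ^N with A u = 0 and r ∈ [0, 1) such that ‖Q^{1/2}(x_n − u)‖₂ ≤ ‖Q^{1/2} x₀‖₂ · rⁿ for all n ≥ 0. -/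
/-!
Scaling by `T = Q^{1/2}` turns the iteration into `y_{n+1} = (1 - B) y_n` with
`B = T⁻¹ A T⁻¹` positive semidefinite. The row-sum condition together with
`|a b| ≤ (a² + b²) / 2` gives `v* B v ≤ ‖v‖²`, so the eigenvalues of `B` lie in `[0, 1]`.
Expanding `y₀` in an orthonormal eigenbasis of `B`, the components along `ker B` stay fixed
(they form `T u`) and every other one shrinks by a factor `1 - μ ≤ r < 1`, where `r` is the
largest `1 - μ` over the nonzero eigenvalues `μ`.
-/

open Matrix BigOperators
open scoped ComplexOrder

noncomputable def l2norm {V : Type*} [Fintype V] (y : V → ℂ) : ℝ :=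
  Real.sqrt (∑ j, ‖y j‖ ^ 2)

lemma conjTranspose_diagonal_ofReal {n : Type*} [DecidableEq n] (s : n → ℝ) :
    (diagonal fun i => (s i : ℂ))ᴴ = diagonal fun i => (s i : ℂ) := by
  simp [diagonal_conjTranspose]

variable {n : Type*} [Fintype n]

lemma l2norm_eq_norm_toLp (v : n → ℂ) : l2norm v = ‖WithLp.toLp 2 v‖ := by
  rw [EuclideanSpace.norm_eq, l2norm]

lemma l2norm_sum_smul (W : OrthonormalBasis n ℂ (EuclideanSpace ℂ n)) (d : n → ℂ) :
    l2norm (∑ i, d i • ⇑(W i)) = l2norm d := by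
  have h : ∑ i, d i • ⇑(W i) = ⇑(W.repr.symm (WithLp.toLp 2 d)) := by
    rw [← W.sum_repr_symm]
    simp only [WithLp.ofLp_sum, WithLp.ofLp_smul]
  rw [h, l2norm_eq_norm_toLp, l2norm_eq_norm_toLp, WithLp.toLp_ofLp, LinearIsometryEquiv.norm_map]

lemma l2norm_le_mul_of_norm_le {c d : n → ℂ} {t : ℝ} (ht : 0 ≤ t) (h : ∀ i, ‖d i‖ ≤ ‖c i‖ * t) :
    l2norm d ≤ l2norm c * t := by
  rw [l2norm, l2norm, ← Real.sqrt_sq ht, ← Real.sqrt_mul (by positivity), Finset.sum_mul]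
  gcongr with i
  simpa [mul_pow] using pow_le_pow_left₀ (norm_nonneg _) (h i) 2

lemma exists_nonneg_lt_one_forall_le {ι : Type*} [Finite ι] (f : ι → ℝ) (hf : ∀ i, f i < 1) :
    ∃ r, 0 ≤ r ∧ r < 1 ∧ ∀ i, f i ≤ r := by
  cases isEmpty_or_nonempty ι
  · exact ⟨0, le_rfl, zero_lt_one, isEmptyElim⟩
  · obtain ⟨i₀, hi₀⟩ := Finite.exists_max f
    exact ⟨max 0 (f i₀), le_max_left _ _, max_lt zero_lt_one (hf i₀),
      fun i => (hi₀ i).trans (le_max_right _ _)⟩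

lemma Matrix.pow_mulVec_of_mulVec_eq_smul {R : Type*} [CommSemiring R] [DecidableEq n]
    {M : Matrix n n R} {v : n → R} {a : R} (h : M *ᵥ v = a • v) (k : ℕ) :
    (M ^ k) *ᵥ v = a ^ k • v := by
  induction k with
  | zero => simp
  | succ k ih => rw [pow_succ, ← mulVec_mulVec, h, mulVec_smul, ih, smul_smul, pow_succ']

lemma Matrix.IsHermitian.re_star_dotProduct_mulVec_le {A : Matrix n n ℂ} (hA : A.IsHermitian)
    (w : n → ℂ) : (star w ⬝ᵥ A *ᵥ w).re ≤ ∑ i, (∑ j, ‖A i j‖) * ‖w i‖ ^ 2 := by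
  have hsymm : ∀ i j, ‖A j i‖ = ‖A i j‖ := fun i j => by
    rw [← hA.apply i j, Complex.star_def, Complex.norm_conj]
  calc (star w ⬝ᵥ A *ᵥ w).re
      ≤ ∑ i, ∑ j, ‖A i j‖ * (‖w i‖ * ‖w j‖) := by
        simp only [dotProduct, mulVec, Finset.mul_sum, Complex.re_sum]
        gcongr with i _ j _
        refine (Complex.re_le_norm _).trans_eq ?_
        simp only [Pi.star_apply, norm_mul, norm_star]
        ring
    _ ≤ ∑ i, ∑ j, (‖A i j‖ * ‖w i‖ ^ 2 + ‖A j i‖ * ‖w j‖ ^ 2) / 2 := by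
        gcongr with i _ j _
        rw [hsymm i j]
        nlinarith [norm_nonneg (A i j), sq_nonneg (‖w i‖ - ‖w j‖)]
    _ = ∑ i, (∑ j, ‖A i j‖) * ‖w i‖ ^ 2 := by
        simp only [add_div, Finset.sum_add_distrib]
        rw [Finset.sum_comm (f := fun i j => ‖A j i‖ * ‖w j‖ ^ 2 / 2), ← Finset.sum_add_distrib]
        refine Finset.sum_congr rfl fun i _ => ?_
        rw [Finset.sum_mul, ← Finset.sum_add_distrib]
        exact Finset.sum_congr rfl fun j _ => by ring

variable [DecidableEq n]

lemma re_star_dotProduct_inv_diagonal_mul_mul_le {A : Matrix n n ℂ} (hA : A.IsHermitian)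
    {s : n → ℝ} (hs : ∀ i, 0 < s i) (hrow : ∀ i, ∑ j, ‖A i j‖ ≤ s i ^ 2) (v : n → ℂ) :
    (star v ⬝ᵥ ((diagonal fun i => (s i : ℂ))⁻¹ * A * (diagonal fun i => (s i : ℂ))⁻¹) *ᵥ v).re
      ≤ ∑ i, ‖v i‖ ^ 2 := by
  set D := (diagonal fun i => (s i : ℂ))⁻¹
  have hD : D = diagonal fun i => ((s i : ℂ))⁻¹ := by
    refine inv_eq_right_inv ?_
    rw [diagonal_mul_diagonal, ← diagonal_one]
    exact congrArg diagonal (funext fun i => mul_inv_cancel₀ (by exact_mod_cast (hs i).ne'))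
  have hDH : Dᴴ = D := by rw [conjTranspose_nonsing_inv, conjTranspose_diagonal_ofReal]
  have hquad : star v ⬝ᵥ (D * A * D) *ᵥ v = star (D *ᵥ v) ⬝ᵥ A *ᵥ (D *ᵥ v) := by
    rw [star_mulVec, hDH, ← dotProduct_mulVec, ← mulVec_mulVec, ← mulVec_mulVec]
  calc (star v ⬝ᵥ (D * A * D) *ᵥ v).re
      ≤ ∑ i, (∑ j, ‖A i j‖) * ‖(D *ᵥ v) i‖ ^ 2 := by
        rw [hquad]; exact hA.re_star_dotProduct_mulVec_le _
    _ ≤ ∑ i, s i ^ 2 * ‖(D *ᵥ v) i‖ ^ 2 := by gcongr with i; exact hrow i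
    _ = ∑ i, ‖v i‖ ^ 2 := by
        refine Finset.sum_congr rfl fun i _ => ?_
        rw [hD, mulVec_diagonal, norm_mul, norm_inv, Complex.norm_real,
          Real.norm_of_nonneg (hs i).le]
        field_simp [(hs i).ne']

lemma Matrix.IsHermitian.eigenvalues_le_of_re_dotProduct_le {B : Matrix n n ℂ}
    (hB : B.IsHermitian) {c : ℝ} (h : ∀ v, (star v ⬝ᵥ B *ᵥ v).re ≤ c * ∑ i, ‖v i‖ ^ 2) (i : n) :
    hB.eigenvalues i ≤ c := by
  have hunit : ∑ j, ‖hB.eigenvectorBasis i j‖ ^ 2 = 1 := by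
    rw [← Real.sqrt_eq_one, ← hB.eigenvectorBasis.orthonormal.1 i, EuclideanSpace.norm_eq]
  rw [hB.eigenvalues_eq]
  simpa [hunit] using h (hB.eigenvectorBasis i)

lemma Matrix.IsHermitian.exists_mulVec_eq_zero_l2norm_pow_mulVec_sub_le {B : Matrix n n ℂ}
    (hB : B.IsHermitian) (h0 : ∀ i, 0 ≤ hB.eigenvalues i) (h1 : ∀ i, hB.eigenvalues i ≤ 1)
    (y : n → ℂ) :
    ∃ (u : n → ℂ) (r : ℝ), B *ᵥ u = 0 ∧ 0 ≤ r ∧ r < 1 ∧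
      ∀ k : ℕ, l2norm ((1 - B) ^ k *ᵥ y - u) ≤ l2norm y * r ^ k := by
  set μ := hB.eigenvalues
  set W := hB.eigenvectorBasis
  set c : n → ℂ := fun i => W.repr (WithLp.toLp 2 y) i
  have hy : y = ∑ i, c i • ⇑(W i) := by
    simpa only [WithLp.ofLp_sum, WithLp.ofLp_smul] using
      congrArg WithLp.ofLp (W.sum_repr (WithLp.toLp 2 y)).symm
  have hBW : ∀ i, B *ᵥ ⇑(W i) = (μ i : ℂ) • ⇑(W i) := fun i => by
    rw [hB.mulVec_eigenvectorBasis, Complex.coe_smul]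
  have hpow : ∀ i k, (1 - B) ^ k *ᵥ ⇑(W i) = ((1 - μ i : ℝ) : ℂ) ^ k • ⇑(W i) := fun i =>
    pow_mulVec_of_mulVec_eq_smul <| by
      rw [sub_mulVec, one_mulVec, hBW]; push_cast; rw [sub_smul, one_smul]
  obtain ⟨r, hr0, hr1, hr⟩ := exists_nonneg_lt_one_forall_le
    (fun i => if μ i = 0 then 0 else 1 - μ i)
    (fun i => by split_ifs with h; exacts [zero_lt_one, by linarith [(h0 i).lt_of_ne' h]])
  refine ⟨∑ i, (if μ i = 0 then c i else 0) • ⇑(W i), r, ?_, hr0, hr1, fun k => ?_⟩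
  · simp only [mulVec_sum, mulVec_smul, hBW, smul_smul]
    exact Finset.sum_eq_zero fun i _ => by split_ifs with h <;> simp [h]
  · have hdiff : (1 - B) ^ k *ᵥ y - ∑ i, (if μ i = 0 then c i else 0) • ⇑(W i)
        = ∑ i, (((1 - μ i : ℝ) : ℂ) ^ k * c i - if μ i = 0 then c i else 0) • ⇑(W i) := by
      conv_lhs => rw [hy]
      simp only [mulVec_sum, mulVec_smul, hpow, smul_smul, ← Finset.sum_sub_distrib, sub_smul,
        mul_comm]
    rw [hdiff, l2norm_sum_smul, hy, l2norm_sum_smul]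
    refine l2norm_le_mul_of_norm_le (pow_nonneg hr0 k) fun i => ?_
    have hr_i := hr i
    split_ifs at hr_i ⊢ with h
    · simpa [h] using by positivity
    · have h1μ : 0 ≤ 1 - μ i := by linarith [h1 i]
      rw [sub_zero, norm_mul, norm_pow, Complex.norm_real, Real.norm_of_nonneg h1μ, mul_comm]
      gcongr

lemma pos_of_isUnit_diagonal_ofReal {q : n → ℝ} (hq : ∀ i, 0 ≤ q i)
    (hQ : IsUnit (diagonal fun i => (q i : ℂ))) (i : n) : 0 < q i := by
  refine (hq i).lt_of_ne' fun h => ?_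
  simpa [h] using Pi.isUnit_iff.mp (isUnit_diagonal.mp hQ) i

lemma mulVec_eq_pow_mulVec_of_mul_eq {R : Type*} [CommRing R] {M M' T : Matrix n n R}
    (hT : T * M = M' * T) {x : ℕ → n → R} (hx : ∀ k, x (k + 1) = M *ᵥ x k) (k : ℕ) :
    T *ᵥ x k = M' ^ k *ᵥ T *ᵥ x 0 := by
  induction k with
  | zero => simp
  | succ k ih => rw [hx, mulVec_mulVec, hT, ← mulVec_mulVec, ih, mulVec_mulVec, pow_succ']

lemma mul_one_sub_inv_mul_self_mul {R : Type*} [CommRing R] {T : Matrix n n R}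
    (hT : IsUnit T.det) (A : Matrix n n R) :
    T * (1 - (T * T)⁻¹ * A) = (1 - T⁻¹ * A * T⁻¹) * T := by
  rw [Matrix.mul_inv_rev, mul_sub, sub_mul, mul_one, one_mul, ← Matrix.mul_assoc,
    ← Matrix.mul_assoc, mul_nonsing_inv _ hT, one_mul, Matrix.mul_assoc _ T⁻¹ T,
    nonsing_inv_mul _ hT, mul_one]

/-- Let `A` be an `N × N` complex positive semidefinite matrix and `Q` an
invertible diagonal matrix with real diagonal entries satisfying
`Q(i,i) ≥ Σ_j |A(i,j)|` for every `i`.  Then for every initial vector `x₀`, the sequence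
`x_{n+1} = (I - Q⁻¹ A) x_n` converges exponentially to a vector `u` with `A u = 0`:
there exist `u` with `A u = 0` and `r ∈ [0,1)` such that
`‖Q^{1/2}(x_n - u)‖₂ ≤ ‖Q^{1/2} x₀‖₂ rⁿ` for all `n`. -/
theorem stmt_7 {N : ℕ} (A : Matrix (Fin N) (Fin N) ℂ) (hA : A.PosSemidef)
    (q : Fin N → ℝ) (Q : Matrix (Fin N) (Fin N) ℂ)
    (hQdiag : Q = Matrix.diagonal fun i => (q i : ℂ))
    (hQinv : IsUnit Q)
    (hq : ∀ i, ∑ j, ‖A i j‖ ≤ q i)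
    (x₀ : Fin N → ℂ) (x : ℕ → Fin N → ℂ) (hx0 : x 0 = x₀)
    (hxrec : ∀ n, x (n + 1) = (1 - Q⁻¹ * A) *ᵥ x n) :
    ∃ (u : Fin N → ℂ) (r : ℝ), A *ᵥ u = 0 ∧ 0 ≤ r ∧ r < 1 ∧
      ∀ n, l2norm ((Matrix.diagonal fun i => (Real.sqrt (q i) : ℂ)) *ᵥ (x n - u)) ≤
        l2norm ((Matrix.diagonal fun i => (Real.sqrt (q i) : ℂ)) *ᵥ x₀) * r ^ n := by
  have hqpos : ∀ i, 0 < q i := pos_of_isUnit_diagonal_ofReal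
    (fun i => (Finset.sum_nonneg fun j _ => norm_nonneg (A i j)).trans (hq i)) (hQdiag ▸ hQinv)
  set T := Matrix.diagonal fun i => (Real.sqrt (q i) : ℂ)
  have hQT : Q = T * T := by
    rw [hQdiag, diagonal_mul_diagonal]
    simp only [← Complex.ofReal_mul, Real.mul_self_sqrt (hqpos _).le]
  have hT : IsUnit T.det := (isUnit_iff_isUnit_det T).mp (isUnit_of_mul_isUnit_left (hQT ▸ hQinv))
  set B := T⁻¹ * A * T⁻¹
  have hB : B.PosSemidef := by
    simpa only [conjTranspose_nonsing_inv, T, conjTranspose_diagonal_ofReal] using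
      hA.mul_mul_conjTranspose_same T⁻¹
  have hB1 : ∀ i, hB.1.eigenvalues i ≤ 1 := hB.1.eigenvalues_le_of_re_dotProduct_le fun v => by
    simpa only [one_mul] using re_star_dotProduct_inv_diagonal_mul_mul_le hA.1
      (fun i => Real.sqrt_pos.2 (hqpos i)) (fun i => (Real.sq_sqrt (hqpos i).le).symm ▸ hq i) v
  obtain ⟨u, r, hBu, hr0, hr1, hdecay⟩ :=
    hB.1.exists_mulVec_eq_zero_l2norm_pow_mulVec_sub_le hB.eigenvalues_nonneg hB1 (T *ᵥ x₀)
  have hiter : ∀ k, T *ᵥ x k = (1 - B) ^ k *ᵥ T *ᵥ x₀ :=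
    hx0 ▸ mulVec_eq_pow_mulVec_of_mul_eq (hQT ▸ mul_one_sub_inv_mul_self_mul hT A) hxrec
  refine ⟨T⁻¹ *ᵥ u, r, ?_, hr0, hr1, fun k => ?_⟩
  · have hAT : A * T⁻¹ = T * B := by
      rw [← Matrix.mul_assoc, ← Matrix.mul_assoc, mul_nonsing_inv _ hT, one_mul]
    rw [mulVec_mulVec, hAT, ← mulVec_mulVec, hBu, mulVec_zero]
  · rw [mulVec_sub, mulVec_mulVec, mul_nonsing_inv _ hT, one_mulVec, hiter]
    exact hdecay k
end
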